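/- arXiv:2001.04323 — 5 statements merged into one kernel-verified Lean document; each statement's English description precedes it below -/
import Mathlib

section
/- Let b, d : [0,∞) → [0,∞) and A : [0,∞) → ℝ be continuous functions with A(x) ≥ A̲ for all x and some constant A̲ > 0, and suppose b(x₀) > 0 for some x₀ > 0. Define F(λ) := ∫₀^∞ (b(x)/A(x))·exp(∫₀ˣ (λ − d(x'))/A(x') dx') dx for λ ∈ ℝ. Let Λ̲ ≤ Λ̄ be real numbers with F(Λ̄) < ∞. Then for every η > 0 satisfying F(Λ̲) ≤ 1/η ≤ F(Λ̄), there exists a unique λ ∈ [Λ̲, Λ̄] such that F(λ) = 1/η. -/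
/-! For fixed `x > 0` the exponent `∫₀ˣ (λ - d)/A = λ ∫₀ˣ 1/A - ∫₀ˣ d/A` is strictly increasing
in `λ`, since `∫₀ˣ 1/A > 0`. Hence the integrand of `F` increases with `λ`, strictly wherever
`b > 0`, and for `λ ≤ Λ̄` it is dominated by the integrable integrand at `Λ̄`. Dominated
convergence makes `F` continuous on `(-∞, Λ̄]`, positivity of `b` near `x₀` makes it strictly
increasing there, and the intermediate value theorem gives the solution, unique by strict
monotonicity. -/

open MeasureTheory Set Filter Topology

theorem integral_lt_integral_of_ae_le_of_measure_setOfPred_lt_ne_zero {α : Type*}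
    [MeasurableSpace α] {μ : Measure α} {f g : α → ℝ} (hf : Integrable f μ) (hg : Integrable g μ)
    (hle : f ≤ᵐ[μ] g) (hlt : μ {x | f x < g x} ≠ 0) :
    ∫ x, f x ∂μ < ∫ x, g x ∂μ := by
  rw [← sub_pos, ← integral_sub hg hf,
    integral_pos_iff_support_of_nonneg_ae (hle.mono fun x => sub_nonneg.2) (hg.sub hf)]
  exact pos_iff_ne_zero.2 (mt (measure_mono_null fun x hx => (sub_pos.2 hx.out).ne') hlt)

theorem continuousOn_primitive_Ici {f : ℝ → ℝ} {a : ℝ} (hf : ContinuousOn f (Ici a)) :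
    ContinuousOn (fun x => ∫ t in a..x, f t) (Ici a) := by
  intro x hx
  have hax : a ≤ x + 1 := by linarith [mem_Ici.1 hx]
  have hcont := intervalIntegral.continuousOn_primitive_interval (a := a) (b := x + 1)
    (μ := volume) (by
      rw [uIcc_of_le hax]
      exact (hf.mono Icc_subset_Ici_self).integrableOn_compact isCompact_Icc)
  rw [uIcc_of_le hax] at hcont
  refine (hcont x ⟨hx, by linarith⟩).mono_of_mem_nhdsWithin ?_
  rw [← Ici_inter_Iic]
  exact inter_mem_nhdsWithin _ (Iic_mem_nhds (by linarith))

theorem intervalIntegral_sub_div_eq {μ : Measure ℝ} {d A : ℝ → ℝ} {a x : ℝ} (l : ℝ)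
    (hA : IntervalIntegrable (fun t => (A t)⁻¹) μ a x)
    (hdA : IntervalIntegrable (fun t => d t / A t) μ a x) :
    ∫ t in a..x, (l - d t) / A t ∂μ =
      l * (∫ t in a..x, (A t)⁻¹ ∂μ) - ∫ t in a..x, d t / A t ∂μ := by
  simp_rw [sub_div, div_eq_mul_inv l]
  rw [intervalIntegral.integral_sub (hA.const_mul l) hdA, intervalIntegral.integral_const_mul]

noncomputable def fitnessDensity (b d A : ℝ → ℝ) (l x : ℝ) : ℝ :=
  b x / A x * Real.exp (∫ t in (0:ℝ)..x, (l - d t) / A t)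

section fitnessDensity

variable {b d A : ℝ → ℝ}

theorem fitnessDensity_eq (hd : ContinuousOn d (Ici 0)) (hA : ContinuousOn A (Ici 0))
    (hApos : ∀ x ≥ (0:ℝ), 0 < A x) {x : ℝ} (hx : 0 ≤ x) (l : ℝ) :
    fitnessDensity b d A l x =
      b x / A x * Real.exp (l * (∫ t in (0:ℝ)..x, (A t)⁻¹) - ∫ t in (0:ℝ)..x, d t / A t) := by
  have hAne : ∀ t ∈ Icc (0:ℝ) x, A t ≠ 0 := fun t ht => (hApos t ht.1).ne'
  have hA' := hA.mono (Icc_subset_Ici_self : Icc 0 x ⊆ Ici 0)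
  rw [fitnessDensity, intervalIntegral_sub_div_eq l
    ((hA'.inv₀ hAne).intervalIntegrable_of_Icc hx)
    (((hd.mono Icc_subset_Ici_self).div hA' hAne).intervalIntegrable_of_Icc hx)]

theorem intervalIntegral_inv_pos (hA : ContinuousOn A (Ici 0)) (hApos : ∀ x ≥ (0:ℝ), 0 < A x)
    {x : ℝ} (hx : 0 < x) : 0 < ∫ t in (0:ℝ)..x, (A t)⁻¹ :=
  intervalIntegral.intervalIntegral_pos_of_pos_on
    (((hA.mono Icc_subset_Ici_self).inv₀ fun t ht => (hApos t ht.1).ne').intervalIntegrable_of_Icc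
      hx.le)
    (fun t ht => inv_pos.2 (hApos t ht.1.le)) hx

theorem fitnessDensity_nonneg {x : ℝ} (hbx : 0 ≤ b x) (hAx : 0 < A x) (l : ℝ) :
    0 ≤ fitnessDensity b d A l x :=
  mul_nonneg (div_nonneg hbx hAx.le) (Real.exp_pos _).le

theorem continuous_fitnessDensity (hd : ContinuousOn d (Ici 0)) (hA : ContinuousOn A (Ici 0))
    (hApos : ∀ x ≥ (0:ℝ), 0 < A x) {x : ℝ} (hx : 0 ≤ x) :
    Continuous fun l => fitnessDensity b d A l x := by
  simp_rw [fitnessDensity_eq hd hA hApos hx]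
  fun_prop

theorem monotone_fitnessDensity (hd : ContinuousOn d (Ici 0)) (hA : ContinuousOn A (Ici 0))
    (hApos : ∀ x ≥ (0:ℝ), 0 < A x) {x : ℝ} (hx : 0 ≤ x) (hbx : 0 ≤ b x) :
    Monotone fun l => fitnessDensity b d A l x := by
  intro l₁ l₂ hl
  have hP : 0 ≤ ∫ t in (0:ℝ)..x, (A t)⁻¹ :=
    intervalIntegral.integral_nonneg hx fun t ht => (inv_pos.2 (hApos t ht.1)).le
  simp only [fitnessDensity_eq hd hA hApos hx]
  gcongr
  exact div_nonneg hbx (hApos x hx).le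

theorem strictMono_fitnessDensity (hd : ContinuousOn d (Ici 0)) (hA : ContinuousOn A (Ici 0))
    (hApos : ∀ x ≥ (0:ℝ), 0 < A x) {x : ℝ} (hx : 0 < x) (hbx : 0 < b x) :
    StrictMono fun l => fitnessDensity b d A l x := by
  intro l₁ l₂ hl
  have hP := intervalIntegral_inv_pos hA hApos hx
  simp only [fitnessDensity_eq hd hA hApos hx.le]
  gcongr
  exact div_pos hbx (hApos x hx.le)

theorem continuousOn_fitnessDensity (hb : ContinuousOn b (Ici 0)) (hd : ContinuousOn d (Ici 0))
    (hA : ContinuousOn A (Ici 0)) (hApos : ∀ x ≥ (0:ℝ), 0 < A x) (l : ℝ) :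
    ContinuousOn (fitnessDensity b d A l) (Ici 0) := by
  have hAne : ∀ x ∈ Ici (0:ℝ), A x ≠ 0 := fun x hx => (hApos x hx).ne'
  exact (hb.div hA hAne).mul (Real.continuous_exp.comp_continuousOn
    (continuousOn_primitive_Ici ((continuousOn_const.sub hd).div hA hAne)))

theorem norm_fitnessDensity_le (hbnn : ∀ x ≥ (0:ℝ), 0 ≤ b x) (hd : ContinuousOn d (Ici 0))
    (hA : ContinuousOn A (Ici 0)) (hApos : ∀ x ≥ (0:ℝ), 0 < A x) {l Λ : ℝ} (hl : l ≤ Λ) :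
    ∀ᵐ x ∂volume.restrict (Ioi 0), ‖fitnessDensity b d A l x‖ ≤ fitnessDensity b d A Λ x := by
  refine ae_restrict_of_forall_mem measurableSet_Ioi fun x hx => ?_
  have hx : 0 ≤ x := le_of_lt hx
  rw [Real.norm_of_nonneg (fitnessDensity_nonneg (hbnn x hx) (hApos x hx) l)]
  exact monotone_fitnessDensity hd hA hApos hx (hbnn x hx) hl

theorem aestronglyMeasurable_fitnessDensity (hb : ContinuousOn b (Ici 0))
    (hd : ContinuousOn d (Ici 0)) (hA : ContinuousOn A (Ici 0)) (hApos : ∀ x ≥ (0:ℝ), 0 < A x)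
    (l : ℝ) : AEStronglyMeasurable (fitnessDensity b d A l) (volume.restrict (Ioi 0)) :=
  ((continuousOn_fitnessDensity hb hd hA hApos l).mono Ioi_subset_Ici_self).aestronglyMeasurable
    measurableSet_Ioi

theorem integrableOn_fitnessDensity_of_le (hb : ContinuousOn b (Ici 0))
    (hd : ContinuousOn d (Ici 0)) (hA : ContinuousOn A (Ici 0)) (hbnn : ∀ x ≥ (0:ℝ), 0 ≤ b x)
    (hApos : ∀ x ≥ (0:ℝ), 0 < A x) {l Λ : ℝ} (hΛ : IntegrableOn (fitnessDensity b d A Λ) (Ioi 0))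
    (hl : l ≤ Λ) : IntegrableOn (fitnessDensity b d A l) (Ioi 0) :=
  hΛ.mono' (aestronglyMeasurable_fitnessDensity hb hd hA hApos l)
    (norm_fitnessDensity_le hbnn hd hA hApos hl)

theorem continuousOn_integral_fitnessDensity (hb : ContinuousOn b (Ici 0))
    (hd : ContinuousOn d (Ici 0)) (hA : ContinuousOn A (Ici 0)) (hbnn : ∀ x ≥ (0:ℝ), 0 ≤ b x)
    (hApos : ∀ x ≥ (0:ℝ), 0 < A x) {Λ : ℝ} (hΛ : IntegrableOn (fitnessDensity b d A Λ) (Ioi 0)) :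
    ContinuousOn (fun l => ∫ x in Ioi 0, fitnessDensity b d A l x) (Iic Λ) :=
  continuousOn_of_dominated (fun l _ => aestronglyMeasurable_fitnessDensity hb hd hA hApos l)
    (fun _ hl => norm_fitnessDensity_le hbnn hd hA hApos hl) hΛ
    (ae_restrict_of_forall_mem measurableSet_Ioi fun _ hx =>
      (continuous_fitnessDensity hd hA hApos (le_of_lt hx)).continuousOn)

theorem strictMonoOn_integral_fitnessDensity (hb : ContinuousOn b (Ici 0))
    (hd : ContinuousOn d (Ici 0)) (hA : ContinuousOn A (Ici 0)) (hbnn : ∀ x ≥ (0:ℝ), 0 ≤ b x)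
    (hApos : ∀ x ≥ (0:ℝ), 0 < A x) (hx₀ : ∃ x₀ > (0:ℝ), 0 < b x₀) {Λ : ℝ}
    (hΛ : IntegrableOn (fitnessDensity b d A Λ) (Ioi 0)) :
    StrictMonoOn (fun l => ∫ x in Ioi 0, fitnessDensity b d A l x) (Iic Λ) := by
  intro l₁ hl₁ l₂ hl₂ hl
  obtain ⟨x₀, hx₀, hbx₀⟩ := hx₀
  have hpos_near : {x | 0 < x ∧ 0 < b x} ∈ 𝓝 x₀ :=
    inter_mem (Ioi_mem_nhds hx₀)
      ((hb.continuousAt (Ici_mem_nhds hx₀)).eventually (lt_mem_nhds hbx₀))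
  refine integral_lt_integral_of_ae_le_of_measure_setOfPred_lt_ne_zero
    (integrableOn_fitnessDensity_of_le hb hd hA hbnn hApos hΛ hl₁)
    (integrableOn_fitnessDensity_of_le hb hd hA hbnn hApos hΛ hl₂)
    (ae_restrict_of_forall_mem measurableSet_Ioi fun x hx =>
      monotone_fitnessDensity hd hA hApos (le_of_lt hx) (hbnn x (le_of_lt hx)) hl.le) ?_
  rw [Measure.restrict_apply' measurableSet_Ioi]
  refine (Measure.measure_pos_of_mem_nhds volume (mem_of_superset hpos_near ?_)).ne'
  rintro x ⟨hx, hbx⟩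
  exact ⟨strictMono_fitnessDensity hd hA hApos hx hbx hl, hx⟩

end fitnessDensity

theorem eigenvalue_exists_unique_general
    (b d A : ℝ → ℝ) (Abar : ℝ)
    (hb : ContinuousOn b (Ici 0)) (hd : ContinuousOn d (Ici 0))
    (hA : ContinuousOn A (Ici 0))
    (hbnn : ∀ x ≥ (0:ℝ), 0 ≤ b x)
    (hAbar : 0 < Abar) (hAge : ∀ x ≥ (0:ℝ), Abar ≤ A x)
    (hx0 : ∃ x₀ > (0:ℝ), 0 < b x₀)
    (F : ℝ → ℝ)
    (hF : ∀ l : ℝ, F l =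
      ∫ x in Ioi (0:ℝ), b x / A x * Real.exp (∫ t in (0:ℝ)..x, (l - d t) / A t))
    (Λlow Λhigh : ℝ) (hΛle : Λlow ≤ Λhigh)
    (hFfin : IntegrableOn
      (fun x => b x / A x * Real.exp (∫ t in (0:ℝ)..x, (Λhigh - d t) / A t))
      (Ioi 0)) :
    ∀ η > (0:ℝ), F Λlow ≤ 1 / η → 1 / η ≤ F Λhigh →
      ∃! l : ℝ, l ∈ Icc Λlow Λhigh ∧ F l = 1 / η := by
  intro η _ hlow hhigh
  have hApos : ∀ x ≥ (0:ℝ), 0 < A x := fun x hx => hAbar.trans_le (hAge x hx)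
  obtain rfl : F = fun l => ∫ x in Ioi 0, fitnessDensity b d A l x := funext hF
  have hcont := continuousOn_integral_fitnessDensity hb hd hA hbnn hApos hFfin
  have hmono := strictMonoOn_integral_fitnessDensity hb hd hA hbnn hApos hx0 hFfin
  obtain ⟨l, hl, hFl⟩ := intermediate_value_Icc hΛle (hcont.mono Icc_subset_Iic_self)
    ⟨hlow, hhigh⟩
  exact ⟨l, ⟨hl, hFl⟩, fun l' ⟨hl', hFl'⟩ =>
    (hmono.mono Icc_subset_Iic_self).injOn hl' hl (hFl'.trans hFl.symm)⟩

/-- existence and uniqueness of the effective fitness `Λ(η)`,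
defined implicitly by `F(Λ(η)) = 1/η`. -/
theorem eigenvalue_exists_unique
    (b d A : ℝ → ℝ) (Abar : ℝ)
    (hb : ContinuousOn b (Ici 0)) (hd : ContinuousOn d (Ici 0))
    (hA : ContinuousOn A (Ici 0))
    (hbnn : ∀ x ≥ (0:ℝ), 0 ≤ b x) (hdnn : ∀ x ≥ (0:ℝ), 0 ≤ d x)
    (hAbar : 0 < Abar) (hAge : ∀ x ≥ (0:ℝ), Abar ≤ A x)
    (hx0 : ∃ x₀ > (0:ℝ), 0 < b x₀)
    (F : ℝ → ℝ)
    (hF : ∀ l : ℝ, F l =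
      ∫ x in Ioi (0:ℝ), b x / A x * Real.exp (∫ t in (0:ℝ)..x, (l - d t) / A t))
    (Λlow Λhigh : ℝ) (hΛle : Λlow ≤ Λhigh)
    (hFfin : IntegrableOn
      (fun x => b x / A x * Real.exp (∫ t in (0:ℝ)..x, (Λhigh - d t) / A t))
      (Ioi 0)) :
    ∀ η > (0:ℝ), F Λlow ≤ 1 / η → 1 / η ≤ F Λhigh →
      ∃! l : ℝ, l ∈ Icc Λlow Λhigh ∧ F l = 1 / η :=
  eigenvalue_exists_unique_general b d A Abar hb hd hA hbnn hAbar hAge hx0 F hF Λlow Λhigh hΛle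
    hFfin
end

section
/- Let F : ℝ → ℝ be twice differentiable, let I ⊆ (0, η̄] be an interval with η̄ > 0, and let Λ : I → ℝ be twice differentiable with F(Λ(η)) = 1/η for all η ∈ I. Assume there are constants L > 0 and δ₀ > 0 such that for all η ∈ I: 0 < F'(Λ(η)) ≤ L and F'(Λ(η))² − F(Λ(η))·F''(Λ(η)) ≤ −δ₀. Then for every η ∈ I: Λ''(η) + Λ'(η)/η ≤ −δ₀/(L³·η̄³); in particular there exists δ > 0 with Λ''(η) + Λ'(η)/η ≤ −δ on I. -/
open Set

/-!
Differentiating `F (Λ η) = η⁻¹` twice gives `F'(Λ) Λ' = -η⁻²` and `F''(Λ) Λ'² + F'(Λ) Λ'' = 2 η⁻³`.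
Eliminating `Λ'` and `Λ''` yields the identity
`Λ'' + Λ'/η = (F'(Λ)² - F(Λ) F''(Λ)) / (F'(Λ)³ η³)`,
whose numerator is at most `-δ₀` and whose denominator is at most `L³ η̄³`.
-/

theorem Set.OrdConnected.uniqueDiffOn {I : Set ℝ} (hI : I.OrdConnected)
    (hnt : ∃ a ∈ I, ∃ b ∈ I, a < b) : UniqueDiffOn ℝ I := by
  obtain ⟨a, ha, b, hb, hab⟩ := hnt
  have hconv : Convex ℝ I := convex_iff_ordConnected.mpr hI
  exact uniqueDiffOn_convex hconv
    (hconv.nontrivial_iff_nonempty_interior.mp ⟨a, ha, b, hb, hab.ne⟩)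

theorem UniqueDiffOn.eq_of_hasDerivAt_of_eqOn {𝕜 E : Type*} [NontriviallyNormedField 𝕜]
    [NormedAddCommGroup E] [NormedSpace 𝕜 E] {s : Set 𝕜} (hs : UniqueDiffOn 𝕜 s)
    {f g : 𝕜 → E} {f' g' : E} {x : 𝕜} (hfg : EqOn f g s) (hx : x ∈ s)
    (hf : HasDerivAt f f' x) (hg : HasDerivAt g g' x) : f' = g' :=
  (hs x hx).eq_deriv s (hf.hasDerivWithinAt.congr (fun _ hy => (hfg hy).symm) (hfg hx).symm)
    hg.hasDerivWithinAt

theorem hasDerivAt_neg_inv_sq {x : ℝ} (hx : x ≠ 0) :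
    HasDerivAt (fun y : ℝ => -(y ^ 2)⁻¹) (2 / x ^ 3) x :=
  ((hasDerivAt_pow 2 x).inv (pow_ne_zero 2 hx)).neg.congr_deriv (by field_simp; ring)

section ImplicitDerivatives

variable {F Λ Λ' Λ'' : ℝ → ℝ} {I : Set ℝ}

theorem deriv_comp_mul_eq_of_comp_eq_inv (hI : UniqueDiffOn ℝ I) (hIpos : I ⊆ Ioi 0)
    (hF : ∀ η ∈ I, DifferentiableAt ℝ F (Λ η)) (hΛ : ∀ η ∈ I, HasDerivAt Λ (Λ' η) η)
    (hrel : ∀ η ∈ I, F (Λ η) = 1 / η) {η : ℝ} (hη : η ∈ I) :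
    deriv F (Λ η) * Λ' η = -(η ^ 2)⁻¹ :=
  hI.eq_of_hasDerivAt_of_eqOn (fun x hx => by simp [hrel x hx]) hη
    ((hF η hη).hasDerivAt.comp η (hΛ η hη)) (hasDerivAt_inv (hIpos hη).ne')

theorem deriv_deriv_comp_mul_add_eq_of_comp_eq_inv (hI : UniqueDiffOn ℝ I)
    (hIpos : I ⊆ Ioi 0) (hF : ∀ η ∈ I, DifferentiableAt ℝ F (Λ η))
    (hF' : ∀ η ∈ I, DifferentiableAt ℝ (deriv F) (Λ η))
    (hΛ : ∀ η ∈ I, HasDerivAt Λ (Λ' η) η) (hΛ' : ∀ η ∈ I, HasDerivAt Λ' (Λ'' η) η)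
    (hrel : ∀ η ∈ I, F (Λ η) = 1 / η) {η : ℝ} (hη : η ∈ I) :
    deriv (deriv F) (Λ η) * Λ' η ^ 2 + deriv F (Λ η) * Λ'' η = 2 / η ^ 3 := by
  have hprod : HasDerivAt (fun x => deriv F (Λ x) * Λ' x)
      (deriv (deriv F) (Λ η) * Λ' η * Λ' η + deriv F (Λ η) * Λ'' η) η :=
    ((hF' η hη).hasDerivAt.comp η (hΛ η hη)).mul (hΛ' η hη)
  rw [sq, ← mul_assoc]
  exact hI.eq_of_hasDerivAt_of_eqOn
    (fun x hx => deriv_comp_mul_eq_of_comp_eq_inv hI hIpos hF hΛ hrel hx) hη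
    hprod (hasDerivAt_neg_inv_sq (hIpos hη).ne')

end ImplicitDerivatives

theorem add_div_eq_of_implicit_derivatives {η A B Λ₁ Λ₂ : ℝ} (hη : η ≠ 0) (hA : A ≠ 0)
    (h₁ : A * Λ₁ = -(η ^ 2)⁻¹) (h₂ : B * Λ₁ ^ 2 + A * Λ₂ = 2 / η ^ 3) :
    Λ₂ + Λ₁ / η = (A ^ 2 - 1 / η * B) / (A ^ 3 * η ^ 3) := by
  field_simp at h₁ h₂ ⊢
  linear_combination (A ^ 2 * η) * h₂ + (A ^ 2 * η - B * (A * Λ₁ * η ^ 2 - 1)) * h₁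

/-- the strengthened concavity estimate (Lemma 5.1):
if `0 < F'(Λ(η)) ≤ L` and `F'(Λ(η))² − F(Λ(η))·F''(Λ(η)) ≤ −δ₀` on the
interval `I ⊆ (0, η̄]`, then `Λ''(η) + Λ'(η)/η ≤ −δ₀/(L³·η̄³)` on `I`. -/
theorem fitness_concavity_strong
    (F Λ Λ' Λ'' : ℝ → ℝ) (ηbar : ℝ) (hηbar : 0 < ηbar)
    (I : Set ℝ) (hIinterval : I.OrdConnected)
    (hInontriv : ∃ a ∈ I, ∃ b ∈ I, a < b)
    (hIsub : I ⊆ Ioc 0 ηbar)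
    (hF : ∀ x : ℝ, DifferentiableAt ℝ F x)
    (hF' : ∀ x : ℝ, DifferentiableAt ℝ (deriv F) x)
    (hΛ : ∀ η ∈ I, HasDerivAt Λ (Λ' η) η)
    (hΛ' : ∀ η ∈ I, HasDerivAt Λ' (Λ'' η) η)
    (hrel : ∀ η ∈ I, F (Λ η) = 1 / η)
    (L δ₀ : ℝ) (hL : 0 < L) (hδ₀ : 0 < δ₀)
    (hF'pos : ∀ η ∈ I, 0 < deriv F (Λ η))
    (hF'le : ∀ η ∈ I, deriv F (Λ η) ≤ L)
    (hconc : ∀ η ∈ I,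
      (deriv F (Λ η)) ^ 2 - F (Λ η) * deriv (deriv F) (Λ η) ≤ -δ₀) :
    (∀ η ∈ I, Λ'' η + Λ' η / η ≤ -δ₀ / (L ^ 3 * ηbar ^ 3)) ∧
    ∃ δ > (0:ℝ), ∀ η ∈ I, Λ'' η + Λ' η / η ≤ -δ := by
  have hI := hIinterval.uniqueDiffOn hInontriv
  have hIpos : I ⊆ Ioi 0 := fun η hη => (hIsub hη).1
  have hbound : ∀ η ∈ I, Λ'' η + Λ' η / η ≤ -δ₀ / (L ^ 3 * ηbar ^ 3) := by
    intro η hη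
    obtain ⟨hη0, hηle⟩ := hIsub hη
    set A := deriv F (Λ η)
    have hA : 0 < A := hF'pos η hη
    rw [add_div_eq_of_implicit_derivatives hη0.ne' hA.ne'
      (deriv_comp_mul_eq_of_comp_eq_inv hI hIpos (fun _ _ => hF _) hΛ hrel hη)
      (deriv_deriv_comp_mul_add_eq_of_comp_eq_inv hI hIpos (fun _ _ => hF _)
        (fun _ _ => hF' _) hΛ hΛ' hrel hη)]
    have hden : A ^ 3 * η ^ 3 ≤ L ^ 3 * ηbar ^ 3 := by
      gcongr
      exact hF'le η hη
    calc (A ^ 2 - 1 / η * deriv (deriv F) (Λ η)) / (A ^ 3 * η ^ 3)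
        ≤ -δ₀ / (A ^ 3 * η ^ 3) := by
          gcongr
          simpa [hrel η hη] using hconc η hη
      _ ≤ -δ₀ / (L ^ 3 * ηbar ^ 3) := by
          simp only [neg_div, neg_le_neg_iff]
          exact div_le_div_of_nonneg_left hδ₀.le (by positivity) hden
  refine ⟨hbound, δ₀ / (L ^ 3 * ηbar ^ 3), by positivity, fun η hη => ?_⟩
  simpa [neg_div] using hbound η hη
end

section
/- Let n ≥ 1, T > 0, C ≥ 0. Let W : [0,T] × ℝⁿ → ℝ be continuous and bounded, and assume that for every y ∈ ℝⁿ the map t ↦ W(t,y) is differentiable on (0,T] (with the one-sided derivative at t = T). Let K : [0,T] × ℝⁿ × ℝⁿ → [0,∞) be measurable with sup over (t,y) of ∫_{ℝⁿ} K(t,y,z)·(1 + |z|) dz finite. Assume ∂_tW(t,y) ≤ C + ∫_{ℝⁿ} K(t,y,z)·(W(t,y+z) − W(t,y)) dz for all t ∈ (0,T] and y ∈ ℝⁿ. Then W(t,y) ≤ sup_{y'∈ℝⁿ} W(0,y') + C·t for all (t,y) ∈ [0,T] × ℝⁿ. -/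
open MeasureTheory Set

/-!
Subtract `(C + ε) t` from `W` and let `Φ` be the supremum of the result over `[0,T] × ℝⁿ`.
If `Φ` exceeded `sup W(0,·)`, pick `(t₀, y)` where the shifted function is within `δ` of `Φ`
and go back along the time line `{y}` to the last time at which it was `≤ Φ - δ`: the mean
value theorem gives a later time `s` with `∂ₜW(s,y) > C + ε`, while still
`W(s,·) ≤ W(s,y) + δ` everywhere, so the nonlocal term is at most `δ · sup ∫ K (1 + |z|) < ε`,
contradicting the inequality. The margin `δ` is needed because the supremum over the
noncompact `ℝⁿ` need not be attained. Finally let `ε → 0`.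
-/

theorem integral_mono_of_integrable_nonneg {α : Type*} [MeasurableSpace α] {μ : Measure α}
    {f g : α → ℝ} (hg : Integrable g μ) (hg0 : 0 ≤ᵐ[μ] g) (hfg : f ≤ᵐ[μ] g) :
    ∫ a, f a ∂μ ≤ ∫ a, g a ∂μ := by
  by_cases hf : Integrable f μ
  · exact integral_mono_ae hf hg hfg
  · rw [integral_undef hf]
    exact integral_nonneg_of_ae hg0

theorem integral_mul_le_mul_integral_mul_one_add_norm {E : Type*} [NormedAddCommGroup E]
    [MeasurableSpace E] {μ : Measure E} {k g : E → ℝ} {δ : ℝ} (hk : ∀ z, 0 ≤ k z)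
    (hint : Integrable (fun z => k z * (1 + ‖z‖)) μ) (hδ : 0 ≤ δ) (hg : ∀ z, g z ≤ δ) :
    ∫ z, k z * g z ∂μ ≤ δ * ∫ z, k z * (1 + ‖z‖) ∂μ := by
  rw [← integral_const_mul]
  refine integral_mono_of_integrable_nonneg (hint.const_mul δ)
    (ae_of_all _ fun z => mul_nonneg hδ (mul_nonneg (hk z) (by positivity)))
    (ae_of_all _ fun z => ?_)
  calc k z * g z ≤ k z * δ := mul_le_mul_of_nonneg_left (hg z) (hk z)
    _ ≤ δ * (k z * (1 + ‖z‖)) := by nlinarith [mul_nonneg (mul_nonneg hδ (hk z)) (norm_nonneg z)]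

theorem exists_mem_Ioo_lt_and_deriv_pos {f f' : ℝ → ℝ} {a b c : ℝ} (hab : a ≤ b)
    (hf : ContinuousOn f (Icc a b)) (hf' : ∀ x ∈ Ioo a b, HasDerivAt f (f' x) x)
    (ha : f a ≤ c) (hb : c < f b) : ∃ x ∈ Ioo a b, c < f x ∧ 0 < f' x := by
  set S := Icc a b ∩ f ⁻¹' Iic c
  have hS : IsClosed S := hf.preimage_isClosed_of_isClosed isClosed_Icc isClosed_Iic
  have hSb : BddAbove S := ⟨b, fun x hx => hx.1.2⟩
  obtain ⟨⟨has, hsb⟩, hfs⟩ : sSup S ∈ S := hS.csSup_mem ⟨a, left_mem_Icc.2 hab, ha⟩ hSb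
  have hsb' : sSup S < b := hsb.lt_of_ne fun h => by rw [h] at hfs; exact hb.not_ge hfs
  have habove : ∀ x ∈ Ioc (sSup S) b, c < f x := fun x hx =>
    not_le.1 fun hle => hx.1.not_ge (le_csSup hSb ⟨⟨has.trans hx.1.le, hx.2⟩, hle⟩)
  obtain ⟨x, hx, hslope⟩ := exists_hasDerivAt_eq_slope f f' hsb'
    (hf.mono (Icc_subset_Icc_left has)) fun x hx => hf' x ⟨has.trans_lt hx.1, hx.2⟩
  refine ⟨x, ⟨has.trans_lt hx.1, hx.2⟩, habove x ⟨hx.1, hx.2.le⟩, ?_⟩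
  rw [hslope]
  exact div_pos (by linarith [habove b ⟨hsb', le_rfl⟩, show f (sSup S) ≤ c from hfs])
    (by linarith)

section NonlocalComparison

variable {E : Type*} [NormedAddCommGroup E] [MeasurableSpace E] {μ : Measure E}
  {T C ε : ℝ} {W W' : ℝ → E → ℝ} {K : ℝ → E → E → ℝ}

theorem sub_mul_le_sub_of_sub_mul_le
    (hW : ∀ y, ContinuousOn (W · y) (Icc 0 T))
    (hW' : ∀ y, ∀ t ∈ Ioc 0 T, HasDerivWithinAt (W · y) (W' t y) (Ioc 0 T) t)
    (hK : ∀ t y z, 0 ≤ K t y z)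
    (hKint : ∀ t ∈ Icc 0 T, ∀ y, Integrable (fun z => K t y z * (1 + ‖z‖)) μ)
    (hineq : ∀ t ∈ Ioc 0 T, ∀ y,
      W' t y ≤ C + ∫ z, K t y z * (W t (y + z) - W t y) ∂μ)
    {Φ δ : ℝ} (hδ : 0 ≤ δ) (hδK : ∀ t ∈ Icc 0 T, ∀ y, δ * ∫ z, K t y z * (1 + ‖z‖) ∂μ < ε)
    (hΦ : ∀ t ∈ Icc 0 T, ∀ y, W t y - (C + ε) * t ≤ Φ) (h0 : ∀ y, W 0 y ≤ Φ - δ) :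
    ∀ t ∈ Icc 0 T, ∀ y, W t y - (C + ε) * t ≤ Φ - δ := by
  intro t ht y
  by_contra! hlt
  have hderiv : ∀ s ∈ Ioo 0 t, HasDerivAt (fun s => W s y - (C + ε) * s) (W' s y - (C + ε)) s :=
    fun s hs => ((hW' y s ⟨hs.1, hs.2.le.trans ht.2⟩).hasDerivAt
      (Ioc_mem_nhds hs.1 (hs.2.trans_le ht.2))).sub
        (((hasDerivAt_id s).const_mul (C + ε)).congr_deriv (mul_one _))
  obtain ⟨s, hs, hfs, hW's⟩ :=
    exists_mem_Ioo_lt_and_deriv_pos (f := fun s => W s y - (C + ε) * s) ht.1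
    (((hW y).mono (Icc_subset_Icc_right ht.2)).sub (by fun_prop)) hderiv
    (by simpa using h0 y) hlt
  have hsT : s ∈ Ioc 0 T := ⟨hs.1, hs.2.le.trans ht.2⟩
  have hjump : ∀ z, W s (y + z) - W s y ≤ δ := fun z => by
    linarith [hΦ s (Ioc_subset_Icc_self hsT) (y + z)]
  linarith [hineq s hsT y, hδK s (Ioc_subset_Icc_self hsT) y,
    integral_mul_le_mul_integral_mul_one_add_norm (hK s y) (hKint s (Ioc_subset_Icc_self hsT) y)
      hδ hjump]

theorem sub_mul_le_iSup_of_pos (hε : 0 < ε)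
    (hW : ∀ y, ContinuousOn (W · y) (Icc 0 T))
    (hWbdd : ∃ B : ℝ, ∀ t ∈ Icc (0:ℝ) T, ∀ y, |W t y| ≤ B)
    (hW' : ∀ y, ∀ t ∈ Ioc 0 T, HasDerivWithinAt (W · y) (W' t y) (Ioc 0 T) t)
    (hK : ∀ t y z, 0 ≤ K t y z)
    (hKint : ∀ t ∈ Icc 0 T, ∀ y, Integrable (fun z => K t y z * (1 + ‖z‖)) μ)
    (hKbdd : ∃ M : ℝ, ∀ t ∈ Icc (0:ℝ) T, ∀ y, ∫ z, K t y z * (1 + ‖z‖) ∂μ ≤ M)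
    (hineq : ∀ t ∈ Ioc 0 T, ∀ y,
      W' t y ≤ C + ∫ z, K t y z * (W t (y + z) - W t y) ∂μ) :
    ∀ t ∈ Icc 0 T, ∀ y, W t y - (C + ε) * t ≤ ⨆ y', W 0 y' := by
  intro t ht y
  obtain ⟨B, hB⟩ := hWbdd
  obtain ⟨M, hM⟩ := hKbdd
  have h0T : (0:ℝ) ∈ Icc 0 T := ⟨le_rfl, ht.1.trans ht.2⟩
  have hW0 : ∀ y, W 0 y ≤ ⨆ y', W 0 y' :=
    le_ciSup ⟨B, forall_mem_range.2 fun y => (abs_le.1 (hB 0 h0T y)).2⟩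
  have hM0 : 0 ≤ M :=
    (integral_nonneg fun z => mul_nonneg (hK 0 y z) (by positivity)).trans (hM 0 h0T y)
  set A := (fun p : ℝ × E => W p.1 p.2 - (C + ε) * p.1) '' (Icc 0 T ×ˢ univ)
  have hA : BddAbove A := by
    refine ⟨B + |C + ε| * T, forall_mem_image.2 fun p hp => ?_⟩
    have := (abs_le.1 (hB p.1 hp.1 p.2)).2
    nlinarith [neg_abs_le (C + ε), hp.1.1, hp.1.2, abs_nonneg (C + ε)]
  have hΦ : ∀ t ∈ Icc 0 T, ∀ y, W t y - (C + ε) * t ≤ sSup A :=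
    fun t ht y => le_csSup hA ⟨(t, y), ⟨ht, mem_univ y⟩, rfl⟩
  by_contra! hlt
  set δ := min (sSup A - ⨆ y', W 0 y') (ε / (M + 1))
  have hδ : 0 < δ := lt_min (by linarith [hΦ t ht y]) (by positivity)
  have hδM : δ * M < ε := calc
    δ * M ≤ ε / (M + 1) * M := mul_le_mul_of_nonneg_right (min_le_right _ _) hM0
    _ < ε := by rw [div_mul_eq_mul_div, div_lt_iff₀ (by positivity)]; nlinarith
  have hshift := sub_mul_le_sub_of_sub_mul_le hW hW' hK hKint hineq hδ.le
    (fun s hs y => (mul_le_mul_of_nonneg_left (hM s hs y) hδ.le).trans_lt hδM) hΦ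
    fun y => by linarith [hW0 y, min_le_left (sSup A - ⨆ y', W 0 y') (ε / (M + 1))]
  have : sSup A ≤ sSup A - δ := csSup_le (Nonempty.image _ ⟨(t, y), ht, mem_univ y⟩)
    (forall_mem_image.2 fun p hp => hshift p.1 hp.1 p.2)
  linarith

end NonlocalComparison

theorem nonlocal_maximum_principle_general
    (n : ℕ) (T C : ℝ)
    (W W' : ℝ → EuclideanSpace ℝ (Fin n) → ℝ)
    (hWcont : ContinuousOn (fun p : ℝ × EuclideanSpace ℝ (Fin n) => W p.1 p.2)
      (Icc 0 T ×ˢ univ))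
    (hWbdd : ∃ B : ℝ, ∀ t ∈ Icc (0:ℝ) T, ∀ y, |W t y| ≤ B)
    (hW' : ∀ y, ∀ t ∈ Ioc (0:ℝ) T,
      HasDerivWithinAt (fun s => W s y) (W' t y) (Ioc 0 T) t)
    (K : ℝ → EuclideanSpace ℝ (Fin n) → EuclideanSpace ℝ (Fin n) → ℝ)
    (hKnn : ∀ t y z, 0 ≤ K t y z)
    (hKint : ∀ t ∈ Icc (0:ℝ) T, ∀ y,
      Integrable (fun z => K t y z * (1 + ‖z‖)))
    (hKbdd : ∃ C₁ : ℝ, ∀ t ∈ Icc (0:ℝ) T, ∀ y,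
      (∫ z, K t y z * (1 + ‖z‖)) ≤ C₁)
    (hineq : ∀ t ∈ Ioc (0:ℝ) T, ∀ y,
      W' t y ≤ C + ∫ z, K t y z * (W t (y + z) - W t y)) :
    ∀ t ∈ Icc (0:ℝ) T, ∀ y, W t y ≤ (⨆ y', W 0 y') + C * t := by
  intro t ht y
  have hWt : ∀ y, ContinuousOn (W · y) (Icc 0 T) := fun y =>
    hWcont.comp (by fun_prop : Continuous fun s : ℝ => (s, y)).continuousOn
      fun s hs => ⟨hs, mem_univ y⟩
  refine le_of_forall_pos_le_add fun η hη => ?_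
  have hε : 0 < η / (t + 1) := div_pos hη (by linarith [ht.1])
  have hmargin : η / (t + 1) * t ≤ η := by
    rw [div_mul_eq_mul_div, div_le_iff₀ (by linarith [ht.1])]
    nlinarith
  linarith [sub_mul_le_iSup_of_pos hε hWt hWbdd hW' hKnn hKint hKbdd hineq t ht y]

/-- nonlocal maximum-principle comparison: if
`∂_tW ≤ C + ∫K(t,y,z)(W(t,y+z)−W(t,y))dz` with a nonnegative kernel of
uniformly finite first moment, then `W(t,y) ≤ sup W(0,·) + C·t`. -/
theorem nonlocal_maximum_principle
    (n : ℕ) (hn : 1 ≤ n) (T C : ℝ) (hT : 0 < T) (hC : 0 ≤ C)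
    (W W' : ℝ → EuclideanSpace ℝ (Fin n) → ℝ)
    (hWcont : ContinuousOn (fun p : ℝ × EuclideanSpace ℝ (Fin n) => W p.1 p.2)
      (Icc 0 T ×ˢ univ))
    (hWbdd : ∃ B : ℝ, ∀ t ∈ Icc (0:ℝ) T, ∀ y, |W t y| ≤ B)
    (hW' : ∀ y, ∀ t ∈ Ioc (0:ℝ) T,
      HasDerivWithinAt (fun s => W s y) (W' t y) (Ioc 0 T) t)
    (K : ℝ → EuclideanSpace ℝ (Fin n) → EuclideanSpace ℝ (Fin n) → ℝ)
    (hKmeas : ∀ t y, Measurable (K t y))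
    (hKnn : ∀ t y z, 0 ≤ K t y z)
    (hKint : ∀ t ∈ Icc (0:ℝ) T, ∀ y,
      Integrable (fun z => K t y z * (1 + ‖z‖)))
    (hKbdd : ∃ C₁ : ℝ, ∀ t ∈ Icc (0:ℝ) T, ∀ y,
      (∫ z, K t y z * (1 + ‖z‖)) ≤ C₁)
    (hineq : ∀ t ∈ Ioc (0:ℝ) T, ∀ y,
      W' t y ≤ C + ∫ z, K t y z * (W t (y + z) - W t y)) :
    ∀ t ∈ Icc (0:ℝ) T, ∀ y, W t y ≤ (⨆ y', W 0 y') + C * t :=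
  nonlocal_maximum_principle_general n T C W W' hWcont hWbdd hW' K hKnn hKint hKbdd hineq
end

section
/- Let n ≥ 1, T > 0, C ≥ 0. Let V : [0,T] × ℝⁿ → ℝ be continuous and bounded, and assume that for every y ∈ ℝⁿ the map t ↦ V(t,y) is differentiable on (0,T] (with the one-sided derivative at t = T). Let K : [0,T] × ℝⁿ × ℝⁿ → [0,∞) be measurable with sup over (t,y) of ∫_{ℝⁿ} K(t,y,z)·(1 + |z|) dz finite. Assume ∂_tV(t,y) ≥ −C + ∫_{ℝⁿ} K(t,y,z)·(V(t,y+z) − V(t,y)) dz for all t ∈ (0,T] and y ∈ ℝⁿ. Then V(t,y) ≥ inf_{y'∈ℝⁿ} V(0,y') − C·t for all (t,y) ∈ [0,T] × ℝⁿ. -/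
/-!
The nonlocal term enters only through the bound
`∫ K (V(t,y+z) - V(t,y)) dz ≥ D * (inf V(t,·) - V(t,y))`, where `D` bounds the mass of `K`.
Fix `ε > 0` and the barrier `b(t) = inf V(0,·) - ε - (C + ε) t`; continuous induction shows
`b(t) < inf V(t,·)` on `[0,T]`. If this holds on `[0,t)`, then for each fixed `y` the gap
`u = V(·,y) - b` satisfies `u' ≥ ε - D u` on `[t/2,t)` and `u(t/2) ≥ 0`, so by Grönwall `u(t)` is
bounded below by a positive constant independent of `y`. The strict inequality then persists to the
right of `t` because boundedness of `V` gives the uniform bound `∂ₜV ≥ -(C + 2BD)`.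
Finally let `ε → 0`.
-/

open MeasureTheory Set Filter Topology

theorem Icc_subset_of_forall_Ico_subset_imp_mem {α : Type*} [ConditionallyCompleteLinearOrder α]
    [TopologicalSpace α] [OrderTopology α] [DenselyOrdered α] {a b : α} {s : Set α}
    (hstep : ∀ t ∈ Icc a b, Ico a t ⊆ s → t ∈ s)
    (hright : ∀ t ∈ Ico a b, t ∈ s → s ∈ 𝓝[>] t) :
    Icc a b ⊆ s := by
  -- `s` need not be closed, but the set of `t` with `[a, t) ⊆ s` is.
  set A := {t | Ico a t ⊆ s}
  have hA : A = ⋂ x ∈ Ici a \ s, Iic x := by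
    ext t
    simp only [A, mem_ofPred_eq, mem_iInter, mem_Iic, Set.mem_sdiff, mem_Ici, subset_def, mem_Ico]
    exact ⟨fun h x hx => not_lt.1 fun hxt => hx.2 (h x ⟨hx.1, hxt⟩),
      fun h x hx => by_contra fun hxs => (h x ⟨hx.1, hxs⟩).not_gt hx.2⟩
  have hA_closed : IsClosed A := hA ▸ isClosed_biInter fun _ _ => isClosed_Iic
  have hsub : Icc a b ⊆ A := by
    refine (hA_closed.inter isClosed_Icc).Icc_subset_of_forall_mem_nhdsWithin
      (by simp [A]) fun x ⟨hxA, hx⟩ => ?_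
    have hxs : x ∈ s := hstep x (Ico_subset_Icc_self hx) hxA
    obtain ⟨u, hxu, hu⟩ := (mem_nhdsGT_iff_exists_Ioo_subset' hx.2).1 (hright x hx hxs)
    refine mem_of_superset (Ioo_mem_nhdsGT hxu) fun t ht τ hτ => ?_
    rcases lt_trichotomy τ x with hτx | rfl | hxτ
    · exact hxA ⟨hτ.1, hτx⟩
    · exact hxs
    · exact hu ⟨hxτ, hτ.2.trans ht.2⟩
  exact fun t ht => hstep t ht (hsub ht)

theorem gronwallBound_neg (δ K ε x : ℝ) :
    gronwallBound (-δ) K (-ε) x = -gronwallBound δ K ε x := by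
  unfold gronwallBound
  split_ifs <;> ring

theorem gronwallBound_zero_pos {K ε x : ℝ} (hε : 0 < ε) (hx : 0 < x) :
    0 < gronwallBound 0 K ε x := by
  rcases lt_trichotomy K 0 with hK | rfl | hK
  · simp only [gronwallBound_of_K_ne_0 hK.ne, zero_mul, zero_add]
    exact mul_pos_of_neg_of_neg (div_neg_of_pos_of_neg hε hK)
      (sub_neg.2 (Real.exp_lt_one_iff.2 (mul_neg_of_neg_of_pos hK hx)))
  · simp only [gronwallBound_K0, zero_add]
    positivity
  · simp only [gronwallBound_of_K_ne_0 hK.ne', zero_mul, zero_add]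
    exact mul_pos (div_pos hε hK) (sub_pos.2 (Real.one_lt_exp_iff.2 (mul_pos hK hx)))

theorem gronwallBound_le_of_deriv_right_ge {f f' : ℝ → ℝ} {δ K ε a b : ℝ}
    (hf : ContinuousOn f (Icc a b))
    (hf' : ∀ x ∈ Ico a b, HasDerivWithinAt f (f' x) (Ici x) x)
    (ha : δ ≤ f a) (bound : ∀ x ∈ Ico a b, K * f x + ε ≤ f' x) :
    ∀ x ∈ Icc a b, gronwallBound δ K ε (x - a) ≤ f x := by
  intro x hx
  have := le_gronwallBound_of_liminf_deriv_right_le (f := -f) (f' := -f') (δ := -δ) (K := K)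
    (ε := -ε) hf.neg (fun x hx _ hr => (hf' x hx).neg.liminf_right_slope_le hr)
    (by simpa using ha) (fun x hx => by simp only [Pi.neg_apply]; linarith [bound x hx]) x hx
  rw [gronwallBound_neg, Pi.neg_apply] at this
  exact neg_le_neg_iff.1 this

theorem mul_le_integral_mul_of_nonpos_le {α : Type*} [MeasurableSpace α] {μ : Measure α}
    {k g : α → ℝ} {c D : ℝ} (hk : ∀ z, 0 ≤ k z) (hki : Integrable k μ)
    (hkg : Integrable (fun z => k z * g z) μ) (hkD : ∫ z, k z ∂μ ≤ D)
    (hc : c ≤ 0) (hg : ∀ z, c ≤ g z) :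
    D * c ≤ ∫ z, k z * g z ∂μ :=
  calc D * c ≤ (∫ z, k z ∂μ) * c := mul_le_mul_of_nonpos_right hkD hc
    _ = ∫ z, k z * c ∂μ := (integral_mul_const c k).symm
    _ ≤ ∫ z, k z * g z ∂μ :=
      integral_mono (hki.mul_const c) hkg fun z => mul_le_mul_of_nonneg_left (hg z) (hk z)

theorem MeasureTheory.Integrable.of_mul_one_add_norm {E : Type*} [NormedAddCommGroup E]
    [MeasurableSpace E] {μ : Measure E} {k : E → ℝ} (hk : ∀ z, 0 ≤ k z)
    (hkm : AEStronglyMeasurable k μ)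
    (h : Integrable (fun z => k z * (1 + ‖z‖)) μ) : Integrable k μ :=
  h.mono' hkm <| .of_forall fun z => by
    rw [Real.norm_of_nonneg (hk z)]
    nlinarith [hk z, norm_nonneg z]

theorem mul_iInf_sub_le_integral {E : Type*} [NormedAddCommGroup E] [MeasurableSpace E]
    [OpensMeasurableSpace E] {μ : Measure E} {k f : E → ℝ} {B D : ℝ} (hk : ∀ z, 0 ≤ k z)
    (hkm : Measurable k) (hk1 : Integrable (fun z => k z * (1 + ‖z‖)) μ)
    (hkD : ∫ z, k z * (1 + ‖z‖) ∂μ ≤ D) (hf : Continuous f) (hB : ∀ x, |f x| ≤ B) (y : E) :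
    D * ((⨅ x, f x) - f y) ≤ ∫ z, k z * (f (y + z) - f y) ∂μ := by
  have hbdd : BddBelow (range f) := ⟨-B, forall_mem_range.2 fun x => (abs_le.1 (hB x)).1⟩
  have hki : Integrable k μ := hk1.of_mul_one_add_norm hk hkm.aestronglyMeasurable
  have hkf : Integrable (fun z => k z * (f (y + z) - f y)) μ := by
    refine hki.mul_bdd (c := B + B)
      ((hf.comp (continuous_const_add y)).sub continuous_const).aestronglyMeasurable
      (.of_forall fun z => ?_)
    rw [Real.norm_eq_abs]
    exact (abs_sub _ _).trans (add_le_add (hB _) (hB _))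
  have hkD' : ∫ z, k z ∂μ ≤ D :=
    (integral_mono hki hk1 fun z => le_mul_of_one_le_right (hk z)
      (le_add_of_nonneg_right (norm_nonneg z))).trans hkD
  exact mul_le_integral_mul_of_nonpos_le hk hki hkf hkD' (sub_nonpos.2 (ciInf_le hbdd y))
    fun z => sub_le_sub_right (ciInf_le hbdd (y + z)) _

section MinimumPrinciple

variable {ι : Type*} [Nonempty ι] {V V' : ℝ → ι → ℝ} {T B C D : ℝ}

theorem iInf_sub_mul_le_iInf {M : ℝ} (hVt : ∀ y, ContinuousOn (fun t => V t y) (Icc 0 T))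
    (hV' : ∀ y, ∀ t ∈ Ioc (0:ℝ) T, HasDerivWithinAt (fun s => V s y) (V' t y) (Ioc 0 T) t)
    (hbdd : ∀ t ∈ Icc (0:ℝ) T, BddBelow (range (V t)))
    (hM : ∀ t ∈ Ioo (0:ℝ) T, ∀ y, -M ≤ V' t y)
    {s t : ℝ} (hs : s ∈ Icc 0 T) (ht : t ∈ Icc 0 T) (hst : s ≤ t) :
    (⨅ y, V s y) - M * (t - s) ≤ ⨅ y, V t y := by
  refine le_ciInf fun y => ?_
  have hderiv : ∀ x ∈ Ioo 0 T, HasDerivAt (fun s => V s y) (V' x y) x := fun x hx =>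
    (hV' y x (Ioo_subset_Ioc_self hx)).hasDerivAt (Ioc_mem_nhds hx.1 hx.2)
  rw [← interior_Icc] at hderiv hM
  have hlip := (convex_Icc 0 T).mul_sub_le_image_sub_of_le_deriv (hVt y)
    (fun x hx => (hderiv x hx).differentiableAt.differentiableWithinAt)
    (fun x hx => (hderiv x hx).deriv ▸ hM x hx y) s hs t ht hst
  linarith [ciInf_le (hbdd s hs) y]

theorem sub_mul_add_gronwallBound_le_iInf (hVt : ∀ y, ContinuousOn (fun t => V t y) (Icc 0 T))
    (hV' : ∀ y, ∀ t ∈ Ioc (0:ℝ) T, HasDerivWithinAt (fun s => V s y) (V' t y) (Ioc 0 T) t)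
    (hbdd : ∀ t ∈ Icc (0:ℝ) T, BddBelow (range (V t))) (hD : 0 ≤ D)
    (hgap : ∀ t ∈ Ioc (0:ℝ) T, ∀ y, -C + D * ((⨅ x, V t x) - V t y) ≤ V' t y)
    {c ε s t : ℝ} (hs : 0 < s) (hst : s < t) (htT : t ≤ T)
    (hbar : ∀ τ ∈ Ico s t, c - (C + ε) * τ ≤ ⨅ y, V τ y) :
    c - (C + ε) * t + gronwallBound 0 (-D) ε (t - s) ≤ ⨅ y, V t y := by
  refine le_ciInf fun y => ?_
  have hsub : Icc s t ⊆ Icc 0 T := Icc_subset_Icc hs.le htT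
  have hderiv : ∀ τ ∈ Ico s t, HasDerivWithinAt (fun τ => V τ y - (c - (C + ε) * τ))
      (V' τ y + (C + ε)) (Ici τ) τ := by
    intro τ hτ
    have hVτ : HasDerivAt (fun s => V s y) (V' τ y) τ :=
      (hV' y τ ⟨hs.trans_le hτ.1, (hτ.2.trans_le htT).le⟩).hasDerivAt
        (Ioc_mem_nhds (hs.trans_le hτ.1) (hτ.2.trans_le htT))
    have hbarτ : HasDerivAt (fun τ => c - (C + ε) * τ) (-((C + ε) * 1)) τ :=
      ((hasDerivAt_id τ).const_mul (C + ε)).const_sub c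
    exact ((hVτ.sub hbarτ).congr_deriv (by ring)).hasDerivWithinAt
  have hbound : ∀ τ ∈ Ico s t,
      -D * (V τ y - (c - (C + ε) * τ)) + ε ≤ V' τ y + (C + ε) := by
    intro τ hτ
    have hτ' : τ ∈ Ioc 0 T := ⟨hs.trans_le hτ.1, (hτ.2.trans_le htT).le⟩
    have := mul_le_mul_of_nonneg_left (sub_le_sub_right (hbar τ hτ) (V τ y)) hD
    linarith [hgap τ hτ' y]
  have hstart : 0 ≤ V s y - (c - (C + ε) * s) := by
    linarith [hbar s ⟨le_rfl, hst⟩, ciInf_le (hbdd s (hsub ⟨le_rfl, hst.le⟩)) y]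
  have hgronwall := gronwallBound_le_of_deriv_right_ge
    (f := fun τ => V τ y - (c - (C + ε) * τ)) (((hVt y).mono hsub).sub (by fun_prop))
    hderiv hstart hbound t ⟨hst.le, le_rfl⟩
  beta_reduce at hgronwall
  linarith

theorem sub_sub_mul_lt_iInf (hVt : ∀ y, ContinuousOn (fun t => V t y) (Icc 0 T))
    (hV' : ∀ y, ∀ t ∈ Ioc (0:ℝ) T, HasDerivWithinAt (fun s => V s y) (V' t y) (Ioc 0 T) t)
    (hB : ∀ t ∈ Icc (0:ℝ) T, ∀ y, |V t y| ≤ B) (hD : 0 ≤ D)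
    (hgap : ∀ t ∈ Ioc (0:ℝ) T, ∀ y, -C + D * ((⨅ x, V t x) - V t y) ≤ V' t y)
    {ε : ℝ} (hε : 0 < ε) :
    ∀ t ∈ Icc (0:ℝ) T, (⨅ y, V 0 y) - ε - (C + ε) * t < ⨅ y, V t y := by
  have hbdd : ∀ t ∈ Icc (0:ℝ) T, BddBelow (range (V t)) := fun t ht =>
    ⟨-B, forall_mem_range.2 fun y => (abs_le.1 (hB t ht y)).1⟩
  have hM : ∀ t ∈ Ioo (0:ℝ) T, ∀ y, -(C + D * (B + B)) ≤ V' t y := by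
    intro t ht y
    have ht' := Ioo_subset_Icc_self ht
    have hspread : -(B + B) ≤ (⨅ x, V t x) - V t y := by
      linarith [le_ciInf fun x => (abs_le.1 (hB t ht' x)).1, (abs_le.1 (hB t ht' y)).2]
    linarith [mul_le_mul_of_nonneg_left hspread hD, hgap t (Ioo_subset_Ioc_self ht) y]
  refine Icc_subset_of_forall_Ico_subset_imp_mem
    (s := {t | (⨅ y, V 0 y) - ε - (C + ε) * t < ⨅ y, V t y})
    (fun t ht hbefore => ?_) fun t ht hlt => ?_
  · rcases ht.1.eq_or_lt with rfl | htpos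
    · simpa using hε
    have hgronwall := sub_mul_add_gronwallBound_le_iInf hVt hV' hbdd hD hgap (half_pos htpos)
      (half_lt_self htpos) ht.2 fun τ hτ =>
        le_of_lt (hbefore ⟨(half_pos htpos).le.trans hτ.1, hτ.2⟩)
    have hpos := gronwallBound_zero_pos (K := -D) hε (sub_pos.2 (half_lt_self htpos))
    exact (lt_add_of_pos_right _ hpos).trans_le hgronwall
  · have hev : ∀ᶠ u in 𝓝 t, (⨅ y, V 0 y) - ε - (C + ε) * u <
        (⨅ y, V t y) - (C + D * (B + B)) * (u - t) :=
      ContinuousAt.eventually_lt (by fun_prop) (by fun_prop) (by simpa using hlt.out)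
    filter_upwards [nhdsWithin_le_nhds hev, Ioc_mem_nhdsGT ht.2] with u hu hu'
    exact hu.trans_le (iInf_sub_mul_le_iInf hVt hV' hbdd hM (Ico_subset_Icc_self ht)
      ⟨ht.1.trans hu'.1.le, hu'.2⟩ hu'.1.le)

theorem iInf_sub_mul_le (hVt : ∀ y, ContinuousOn (fun t => V t y) (Icc 0 T))
    (hV' : ∀ y, ∀ t ∈ Ioc (0:ℝ) T, HasDerivWithinAt (fun s => V s y) (V' t y) (Ioc 0 T) t)
    (hB : ∀ t ∈ Icc (0:ℝ) T, ∀ y, |V t y| ≤ B) (hD : 0 ≤ D)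
    (hgap : ∀ t ∈ Ioc (0:ℝ) T, ∀ y, -C + D * ((⨅ x, V t x) - V t y) ≤ V' t y) :
    ∀ t ∈ Icc (0:ℝ) T, ∀ y, (⨅ y', V 0 y') - C * t ≤ V t y := by
  intro t ht y
  have hlim : Tendsto (fun ε => (⨅ y', V 0 y') - ε - (C + ε) * t) (𝓝[>] 0)
      (𝓝 ((⨅ y', V 0 y') - C * t)) := by
    refine (Continuous.tendsto' ?_ 0 _ ?_).mono_left nhdsWithin_le_nhds
    · fun_prop
    · ring
  refine le_of_tendsto hlim (eventually_nhdsWithin_of_forall fun ε hε => ?_)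
  exact (sub_sub_mul_lt_iInf hVt hV' hB hD hgap hε t ht).le.trans
    (ciInf_le ⟨-B, forall_mem_range.2 fun y => (abs_le.1 (hB t ht y)).1⟩ y)

end MinimumPrinciple

theorem nonlocal_minimum_principle_general
    (n : ℕ) (T C : ℝ)
    (V V' : ℝ → EuclideanSpace ℝ (Fin n) → ℝ)
    (hVcont : ContinuousOn (fun p : ℝ × EuclideanSpace ℝ (Fin n) => V p.1 p.2)
      (Icc 0 T ×ˢ univ))
    (hVbdd : ∃ B : ℝ, ∀ t ∈ Icc (0:ℝ) T, ∀ y, |V t y| ≤ B)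
    (hV' : ∀ y, ∀ t ∈ Ioc (0:ℝ) T,
      HasDerivWithinAt (fun s => V s y) (V' t y) (Ioc 0 T) t)
    (K : ℝ → EuclideanSpace ℝ (Fin n) → EuclideanSpace ℝ (Fin n) → ℝ)
    (hKmeas : ∀ t y, Measurable (K t y))
    (hKnn : ∀ t y z, 0 ≤ K t y z)
    (hKint : ∀ t ∈ Icc (0:ℝ) T, ∀ y,
      Integrable (fun z => K t y z * (1 + ‖z‖)))
    (hKbdd : ∃ C₁ : ℝ, ∀ t ∈ Icc (0:ℝ) T, ∀ y,
      (∫ z, K t y z * (1 + ‖z‖)) ≤ C₁)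
    (hineq : ∀ t ∈ Ioc (0:ℝ) T, ∀ y,
      -C + (∫ z, K t y z * (V t (y + z) - V t y)) ≤ V' t y) :
    ∀ t ∈ Icc (0:ℝ) T, ∀ y, (⨅ y', V 0 y') - C * t ≤ V t y := by
  obtain ⟨B, hB⟩ := hVbdd
  obtain ⟨C₁, hC₁⟩ := hKbdd
  refine iInf_sub_mul_le (D := max C₁ 0)
    (fun y => hVcont.comp (by fun_prop : Continuous fun t => (t, y)).continuousOn
      fun t ht => ⟨ht, mem_univ y⟩) hV' hB (le_max_right _ _)
    fun t ht y => ?_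
  have ht' := Ioc_subset_Icc_self ht
  calc -C + max C₁ 0 * ((⨅ x, V t x) - V t y)
      ≤ -C + ∫ z, K t y z * (V t (y + z) - V t y) := by
        gcongr
        exact mul_iInf_sub_le_integral (hKnn t y) (hKmeas t y) (hKint t ht' y)
          ((hC₁ t ht' y).trans (le_max_left _ _))
          (hVcont.comp_continuous (by fun_prop : Continuous fun y => (t, y))
            fun y => ⟨ht', mem_univ y⟩) (hB t ht') y
    _ ≤ V' t y := hineq t ht y

/-- nonlocal minimum-principle comparison: if
`∂_tV ≥ −C + ∫K(t,y,z)(V(t,y+z)−V(t,y))dz` with a nonnegative kernel of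
uniformly finite first moment, then `V(t,y) ≥ inf V(0,·) − C·t`. -/
theorem nonlocal_minimum_principle
    (n : ℕ) (hn : 1 ≤ n) (T C : ℝ) (hT : 0 < T) (hC : 0 ≤ C)
    (V V' : ℝ → EuclideanSpace ℝ (Fin n) → ℝ)
    (hVcont : ContinuousOn (fun p : ℝ × EuclideanSpace ℝ (Fin n) => V p.1 p.2)
      (Icc 0 T ×ˢ univ))
    (hVbdd : ∃ B : ℝ, ∀ t ∈ Icc (0:ℝ) T, ∀ y, |V t y| ≤ B)
    (hV' : ∀ y, ∀ t ∈ Ioc (0:ℝ) T,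
      HasDerivWithinAt (fun s => V s y) (V' t y) (Ioc 0 T) t)
    (K : ℝ → EuclideanSpace ℝ (Fin n) → EuclideanSpace ℝ (Fin n) → ℝ)
    (hKmeas : ∀ t y, Measurable (K t y))
    (hKnn : ∀ t y z, 0 ≤ K t y z)
    (hKint : ∀ t ∈ Icc (0:ℝ) T, ∀ y,
      Integrable (fun z => K t y z * (1 + ‖z‖)))
    (hKbdd : ∃ C₁ : ℝ, ∀ t ∈ Icc (0:ℝ) T, ∀ y,
      (∫ z, K t y z * (1 + ‖z‖)) ≤ C₁)
    (hineq : ∀ t ∈ Ioc (0:ℝ) T, ∀ y,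
      -C + (∫ z, K t y z * (V t (y + z) - V t y)) ≤ V' t y) :
    ∀ t ∈ Icc (0:ℝ) T, ∀ y, (⨅ y', V 0 y') - C * t ≤ V t y :=
  nonlocal_minimum_principle_general n T C V V' hVcont hVbdd hV' K hKmeas hKnn hKint hKbdd hineq
end

section
/- Let n ≥ 1, T > 0. Let Λ : ℝⁿ × (0,∞) → ℝ be continuously differentiable. Let M : ℝⁿ → [0,∞) be measurable with ∫_{ℝⁿ} M(z) dz = 1 and ∫_{ℝⁿ} M(z)·(1+|z|)·e^{p·z} dz < ∞ for every p ∈ ℝⁿ. Let U : [0,T] × ℝⁿ → ℝ be twice continuously differentiable and satisfy ∂_tU(t,y) = −Λ(y, η(t,y)) for all (t,y), where η(t,y) := ∫_{ℝⁿ} M(z)·e^{∇_yU(t,y)·z} dz. Let ȳ : [0,T] → ℝⁿ be continuously differentiable with ∇_yU(t, ȳ(t)) = 0 for all t ∈ [0,T], and assume the Hessian D²_yU(t, ȳ(t)) is invertible for all t. Then ȳ satisfies the Canonical Equation: ȳ'(t) = (D²_yU(t, ȳ(t)))⁻¹ · ∇_yΛ(ȳ(t), 1) + ∂_ηΛ(ȳ(t),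 1) · ∫_{ℝⁿ} M(z)·z dz for all t ∈ [0,T]. -/
/-!
Differentiating `∇_yU(t, ȳ(t)) = 0` in `t` gives `D²_yU · ȳ' + ∇_y ∂_tU = 0` at `ȳ(t)`, where the
symmetry of second derivatives turns `∂_t ∇_yU` into `∇_y ∂_tU`. Differentiating the
Hamilton–Jacobi equation in `y` at `ȳ(t)`, where `∇_yU = 0` and hence `η = 1`, gives
`∇_y ∂_tU = -∇_yΛ(ȳ, 1) - ∂_ηΛ(ȳ, 1) ∇_yη`. Differentiating under the integral sign and using the
symmetry of the Hessian, `∇_yη = D²_yU · ∫ M(z) z dz`. Inverting the Hessian gives the equation.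
-/

open MeasureTheory Set
open scoped RealInnerProductSpace

section ExponentialMoments

open Real

variable {ι : Type*} [Fintype ι]

lemma exp_inner_le_sum_exp_inner_sign [DecidableEq ι] {x : EuclideanSpace ℝ ι} (hx : ‖x‖ ≤ 1)
    (z : EuclideanSpace ℝ ι) :
    exp ⟪x, z⟫ ≤
      ∑ σ ∈ Fintype.piFinset fun _ : ι => ({1, -1} : Finset ℝ), exp ⟪WithLp.toLp 2 σ, z⟫ := by
  have hcoord : ∀ i, exp (x i * z i) ≤ ∑ s ∈ ({1, -1} : Finset ℝ), exp (s * z i) := by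
    intro i
    have hxz : x i * z i ≤ |z i| := by
      calc x i * z i ≤ |x i| * |z i| := by rw [← abs_mul]; exact le_abs_self _
        _ ≤ |z i| := mul_le_of_le_one_left (abs_nonneg _) ((PiLp.norm_apply_le x i).trans hx)
    rw [Finset.sum_pair (by norm_num), one_mul, neg_one_mul]
    rcases abs_choice (z i) with h | h <;> rw [h] at hxz
    · exact (exp_le_exp.2 hxz).trans (le_add_of_nonneg_right (exp_pos _).le)
    · exact (exp_le_exp.2 hxz).trans (le_add_of_nonneg_left (exp_pos _).le)
  calc exp ⟪x, z⟫ = ∏ i, exp (x i * z i) := by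
        simp [PiLp.inner_apply, exp_sum, mul_comm]
    _ ≤ ∏ i, ∑ s ∈ ({1, -1} : Finset ℝ), exp (s * z i) :=
        Finset.prod_le_prod (fun i _ => (exp_pos _).le) fun i _ => hcoord i
    _ = ∑ σ ∈ Fintype.piFinset fun _ : ι => ({1, -1} : Finset ℝ), ∏ i, exp (σ i * z i) :=
        Finset.prod_univ_sum _ _
    _ = _ := by simp [PiLp.inner_apply, exp_sum, mul_comm]

variable {μ : Measure (EuclideanSpace ℝ ι)} {M : EuclideanSpace ℝ ι → ℝ}

theorem hasFDerivAt_integral_mul_exp_inner (hM : AEStronglyMeasurable M μ)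
    (hMexp : ∀ p, Integrable (fun z => M z * (1 + ‖z‖) * exp ⟪p, z⟫) μ) :
    HasFDerivAt (fun p => ∫ z, M z * exp ⟪p, z⟫ ∂μ) (innerSL ℝ (∫ z, M z • z ∂μ)) 0 := by
  classical
  have hweight : Integrable (fun z => M z * (1 + ‖z‖)) μ := by simpa using hMexp 0
  have hM_int : Integrable M μ := hweight.mono hM <| .of_forall fun z => by
    rw [norm_mul, Real.norm_of_nonneg (by positivity : (0:ℝ) ≤ 1 + ‖z‖)]
    exact le_mul_of_one_le_right (norm_nonneg _) (by simp)
  have hMz_int : Integrable (fun z => M z • z) μ :=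
    hweight.mono (hM.smul aestronglyMeasurable_id) <| .of_forall fun z => by
      rw [norm_smul, norm_mul, Real.norm_of_nonneg (by positivity : (0:ℝ) ≤ 1 + ‖z‖)]
      exact mul_le_mul_of_nonneg_left (by simp) (norm_nonneg _)
  -- on the unit ball, `exp ⟪p, z⟫` is dominated by finitely many exponential moments
  let signs := Fintype.piFinset fun _ : ι => ({1, -1} : Finset ℝ)
  have key := hasFDerivAt_integral_of_dominated_of_fderiv_le (μ := μ) (x₀ := 0)
    (F := fun p z => M z * exp ⟪p, z⟫)
    (F' := fun p z => innerSL ℝ ((M z * exp ⟪p, z⟫) • z))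
    (bound := fun z => ∑ σ ∈ signs, ‖M z * (1 + ‖z‖) * exp ⟪WithLp.toLp 2 σ, z⟫‖)
    (Metric.closedBall_mem_nhds 0 one_pos) ?_ ?_ ?_ ?_ ?_ ?_
  · simp only [inner_zero_left, exp_zero, mul_one] at key
    rwa [(innerSL ℝ).integral_comp_comm hMz_int] at key
  · exact .of_forall fun p => hM.mul (by fun_prop)
  · simpa using hM_int
  · exact (innerSL ℝ).continuous.comp_aestronglyMeasurable
      ((hM.mul (by fun_prop)).smul aestronglyMeasurable_id)
  · refine .of_forall fun z p hp => ?_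
    have hexp := exp_inner_le_sum_exp_inner_sign (mem_closedBall_zero_iff.1 hp) z
    calc ‖innerSL ℝ ((M z * exp ⟪p, z⟫) • z)‖ = ‖M z‖ * exp ⟪p, z⟫ * ‖z‖ := by
          rw [innerSL_apply_norm, norm_smul, norm_mul, Real.norm_of_nonneg (exp_pos _).le]
      _ ≤ ‖M z‖ * (1 + ‖z‖) * ∑ σ ∈ signs, exp ⟪WithLp.toLp 2 σ, z⟫ := by
          rw [mul_right_comm]
          gcongr
          linarith
      _ = _ := by
          simp only [Finset.mul_sum, norm_mul, Real.norm_of_nonneg (exp_pos _).le,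
            Real.norm_of_nonneg (by positivity : (0:ℝ) ≤ 1 + ‖z‖)]
  · exact integrable_finsetSum _ fun σ _ => (hMexp _).norm
  · refine .of_forall fun z p _ => ?_
    refine ((((innerSL ℝ z).hasFDerivAt).exp).const_mul (M z)).congr_of_eventuallyEq
      (.of_forall fun q => by simp [real_inner_comm]) |>.congr_fderiv ?_
    ext v
    simp [real_inner_comm]
    ring

end ExponentialMoments

section Gradient

variable {E : Type*} [NormedAddCommGroup E] [InnerProductSpace ℝ E] [CompleteSpace E]

open InnerProductSpace ContinuousLinearMap

lemma HasGradientAt.neg {f : E → ℝ} {f' x : E} (hf : HasGradientAt f f' x) :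
    HasGradientAt (fun x => -f x) (-f') x := by
  rw [hasGradientAt_iff_hasFDerivAt, map_neg]
  exact (hasGradientAt_iff_hasFDerivAt.1 hf).neg

lemma hasGradientAt_comp_of_isSymmetric {g : E → E} {H : E →L[ℝ] E} {h : E → ℝ} {m x : E}
    (hh : HasFDerivAt h (innerSL ℝ m) (g x)) (hg : HasFDerivAt g H x)
    (hH : (H : E →ₗ[ℝ] E).IsSymmetric) :
    HasGradientAt (fun x => h (g x)) (H m) x := by
  refine hasGradientAt_iff_hasFDerivAt.2 ((hh.comp x hg).congr_fderiv ?_)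
  ext w
  simpa [real_inner_comm] using (hH m w).symm

lemma hasGradientAt_uncurry_comp {Λ : E → ℝ → ℝ} {φ : E → ℝ} {φ' y : E}
    (hΛ : DifferentiableAt ℝ (Function.uncurry Λ) (y, φ y)) (hφ : HasGradientAt φ φ' y) :
    HasGradientAt (fun x => Λ x (φ x))
      (gradient (fun x => Λ x (φ y)) y + deriv (Λ y) (φ y) • φ') y := by
  set L := fderiv ℝ (Function.uncurry Λ) (y, φ y)
  have hL : HasFDerivAt (Function.uncurry Λ) L (y, φ y) := hΛ.hasFDerivAt
  have hx : HasFDerivAt (fun x => Λ x (φ y)) (L ∘L inl ℝ E ℝ) y :=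
    HasFDerivAt.comp (f := fun x => (x, φ y)) y hL (hasFDerivAt_prodMk_left y (φ y))
  have hs : HasDerivAt (Λ y) (L (0, 1)) (φ y) :=
    hL.comp_hasDerivAt (φ y) ((hasDerivAt_const _ y).prodMk (hasDerivAt_id _))
  rw [hx.hasGradientAt.gradient, hs.deriv]
  refine hasGradientAt_iff_hasFDerivAt.2 <|
    (HasFDerivAt.comp (f := fun x => (x, φ x)) y hL
      ((hasFDerivAt_id y).prodMk (hasGradientAt_iff_hasFDerivAt.1 hφ))).congr_fderiv ?_
  ext w
  have hdecomp : ((w, ⟪φ', w⟫) : E × ℝ) = (w, 0) + ⟪φ', w⟫ • (0, 1) := by ext <;> simp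
  rw [toDual_apply_apply, inner_add_left, toDual_symm_apply, real_inner_smul_left,
    comp_apply, prod_apply, toDual_apply_apply, coe_id', id_eq, hdecomp,
    map_add, map_smul, smul_eq_mul, mul_comm, comp_apply, inl_apply]

/-- The Riesz representative of the restriction of a functional to `{0} × E`. -/
noncomputable def gradientSnd : ((ℝ × E) →L[ℝ] ℝ) →L[ℝ] E :=
  (toDual ℝ E).symm.toContinuousLinearEquiv.toContinuousLinearMap ∘L
    (compL ℝ E (ℝ × E) ℝ).flip (inr ℝ ℝ E)

lemma inner_gradientSnd (L : (ℝ × E) →L[ℝ] ℝ) (w : E) : ⟪gradientSnd L, w⟫ = L (0, w) := by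
  simp [gradientSnd, toDual_symm_apply]

variable {U : ℝ → E → ℝ}

lemma gradient_eq_gradientSnd_fderiv {s : ℝ} {y : E}
    (hU : DifferentiableAt ℝ (Function.uncurry U) (s, y)) :
    gradient (U s) y = gradientSnd (fderiv ℝ (Function.uncurry U) (s, y)) := by
  have h : HasFDerivAt (U s) (fderiv ℝ (Function.uncurry U) (s, y) ∘L inr ℝ ℝ E) y :=
    HasFDerivAt.comp (f := fun y => (s, y)) y hU.hasFDerivAt (hasFDerivAt_prodMk_right s y)
  exact h.hasGradientAt.gradient

lemma hasFDerivAt_gradient_uncurry (hU : ContDiff ℝ 2 (Function.uncurry U)) (q : ℝ × E) :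
    HasFDerivAt (fun q : ℝ × E => gradient (U q.1) q.2)
      (gradientSnd ∘L fderiv ℝ (fderiv ℝ (Function.uncurry U)) q) q := by
  have hdiff := (hU.fderiv_right (m := 1) le_rfl).differentiable one_ne_zero q
  refine (gradientSnd.hasFDerivAt.comp q hdiff.hasFDerivAt).congr_of_eventuallyEq ?_
  exact .of_forall fun p => gradient_eq_gradientSnd_fderiv (hU.differentiable two_ne_zero p)

lemma hasFDerivAt_gradient_of_contDiff_uncurry (hU : ContDiff ℝ 2 (Function.uncurry U))
    (s : ℝ) (y : E) :
    HasFDerivAt (fun y => gradient (U s) y)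
      (gradientSnd ∘L fderiv ℝ (fderiv ℝ (Function.uncurry U)) (s, y) ∘L inr ℝ ℝ E) y :=
  HasFDerivAt.comp (f := fun y => (s, y)) y (hasFDerivAt_gradient_uncurry hU (s, y))
    (hasFDerivAt_prodMk_right s y)

lemma isSymmetric_fderiv_gradient (hU : ContDiff ℝ 2 (Function.uncurry U)) (s : ℝ) (y : E) :
    (fderiv ℝ (fun y => gradient (U s) y) y : E →ₗ[ℝ] E).IsSymmetric := by
  intro v w
  have hB : IsSymmSndFDerivAt ℝ (Function.uncurry U) (s, y) :=
    hU.contDiffAt.isSymmSndFDerivAt (by simp)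
  rw [real_inner_comm _ v, (hasFDerivAt_gradient_of_contDiff_uncurry hU s y).fderiv]
  simp [inner_gradientSnd, hB (0, v)]

lemma hasDerivWithinAt_gradient_comp (hU : ContDiff ℝ 2 (Function.uncurry U)) {c : ℝ → E}
    {c' : E} {S : Set ℝ} {t : ℝ} (hc : HasDerivWithinAt c c' S t) :
    HasDerivWithinAt (fun s => gradient (U s) (c s))
      (fderiv ℝ (fun y => gradient (U t) y) (c t) c' +
        gradient (fun y => deriv (fun s => U s y) t) (c t)) S t := by
  set B := fderiv ℝ (fderiv ℝ (Function.uncurry U)) (t, c t)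
  have hB : IsSymmSndFDerivAt ℝ (Function.uncurry U) (t, c t) :=
    hU.contDiffAt.isSymmSndFDerivAt (by simp)
  have hdiff := (hU.fderiv_right (m := 1) le_rfl).differentiable one_ne_zero (t, c t)
  have hdt : (fun y => deriv (fun s => U s y) t) =
      fun y => fderiv ℝ (Function.uncurry U) (t, y) (1, 0) := funext fun y =>
    HasDerivAt.deriv <| HasFDerivAt.comp_hasDerivAt (f := fun s => (s, y)) t
      (hU.differentiable two_ne_zero (t, y)).hasFDerivAt
      ((hasDerivAt_id t).prodMk (hasDerivAt_const t y))
  have hmixed : gradient (fun y => deriv (fun s => U s y) t) (c t) = gradientSnd (B (1, 0)) := by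
    rw [hdt]
    refine HasGradientAt.gradient (hasGradientAt_iff_hasFDerivAt.2 ?_)
    have := HasFDerivAt.comp (f := fun y => (t, y)) (c t)
      ((apply ℝ ℝ ((1 : ℝ), (0 : E))).hasFDerivAt.comp (t, c t) hdiff.hasFDerivAt)
      (hasFDerivAt_prodMk_right t (c t))
    refine this.congr_fderiv ?_
    ext w
    simp [inner_gradientSnd, B, hB (0, w)]
  have h := (hasFDerivAt_gradient_uncurry hU (t, c t)).comp_hasDerivWithinAt t
    ((hasDerivWithinAt_id t S).prodMk hc)
  refine h.congr_deriv ?_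
  rw [(hasFDerivAt_gradient_of_contDiff_uncurry hU t (c t)).fderiv, hmixed]
  have hsplit : ((1 : ℝ), c') = (0, c') + (1, 0) := by ext <;> simp
  rw [comp_apply, hsplit, map_add, map_add]
  rfl

end Gradient

theorem canonical_equation_general
    (n : ℕ) (T : ℝ) (hT : 0 < T)
    (Λ : EuclideanSpace ℝ (Fin n) → ℝ → ℝ)
    (hΛ : ContDiff ℝ 1 (fun p : EuclideanSpace ℝ (Fin n) × ℝ => Λ p.1 p.2))
    (M : EuclideanSpace ℝ (Fin n) → ℝ)
    (hMmeas : Measurable M)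
    (hMprob : ∫ z, M z = 1)
    (hMexp : ∀ p : EuclideanSpace ℝ (Fin n),
      Integrable (fun z => M z * (1 + ‖z‖) * Real.exp ⟪p, z⟫))
    (U : ℝ → EuclideanSpace ℝ (Fin n) → ℝ)
    (hU : ContDiff ℝ 2 (fun q : ℝ × EuclideanSpace ℝ (Fin n) => U q.1 q.2))
    (η : ℝ → EuclideanSpace ℝ (Fin n) → ℝ)
    (hη : ∀ t y, η t y = ∫ z, M z * Real.exp ⟪gradient (U t) y, z⟫)
    (hHJ : ∀ t ∈ Icc (0:ℝ) T, ∀ y, deriv (fun s => U s y) t = -Λ y (η t y))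
    (ybar ybar' : ℝ → EuclideanSpace ℝ (Fin n))
    (hybar : ∀ t ∈ Icc (0:ℝ) T, HasDerivWithinAt ybar (ybar' t) (Icc 0 T) t)
    (hcrit : ∀ t ∈ Icc (0:ℝ) T, gradient (U t) (ybar t) = 0)
    (hinv : ∀ t ∈ Icc (0:ℝ) T,
      IsUnit (fderiv ℝ (fun y => gradient (U t) y) (ybar t))) :
    ∀ t ∈ Icc (0:ℝ) T,
      ybar' t =
        (Ring.inverse (fderiv ℝ (fun y => gradient (U t) y) (ybar t)))
          (gradient (fun y => Λ y 1) (ybar t))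
        + deriv (Λ (ybar t)) 1 • ∫ z, M z • z := by
  intro t ht
  have hU' : ContDiff ℝ 2 (Function.uncurry U) := hU
  set H := fderiv ℝ (fun y => gradient (U t) y) (ybar t)
  set m := ∫ z, M z • z
  have hcurve : H (ybar' t) + gradient (fun y => deriv (fun s => U s y) t) (ybar t) = 0 :=
    (uniqueDiffOn_Icc hT t ht).eq_deriv _ (hasDerivWithinAt_gradient_comp hU' (hybar t ht))
      ((hasDerivWithinAt_const t _ 0).congr hcrit (hcrit t ht))
  have hη1 : η t (ybar t) = 1 := by
    rw [hη, hcrit t ht]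
    simpa using hMprob
  have hηgrad : HasGradientAt (η t) (H m) (ybar t) := by
    have hmgf := hasFDerivAt_integral_mul_exp_inner hMmeas.aestronglyMeasurable hMexp
    rw [← hcrit t ht] at hmgf
    rw [funext (hη t)]
    exact hasGradientAt_comp_of_isSymmetric hmgf
      (hasFDerivAt_gradient_of_contDiff_uncurry hU' t (ybar t)).differentiableAt.hasFDerivAt
      (isSymmetric_fderiv_gradient hU' t (ybar t))
  have hΛgrad := hasGradientAt_uncurry_comp
    (hΛ.differentiable one_ne_zero (ybar t, η t (ybar t))) hηgrad
  rw [hη1] at hΛgrad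
  have hHy : H (ybar' t) = gradient (fun y => Λ y 1) (ybar t) + deriv (Λ (ybar t)) 1 • H m := by
    rw [funext (hHJ t ht), hΛgrad.neg.gradient] at hcurve
    rw [eq_neg_of_add_eq_zero_left hcurve, neg_neg]
  have hHinv : ∀ x, Ring.inverse H (H x) = x :=
    DFunLike.congr_fun (Ring.inverse_mul_cancel H (hinv t ht))
  rw [← hHinv (ybar' t), hHy, map_add, map_smul, hHinv]

/-- the Canonical Equation: if `U` solves the limiting
Hamilton–Jacobi equation `∂_tU = −Λ(y, ∫M(z)e^{∇_yU·z}dz)` and `ȳ(t)` is a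
nondegenerate critical point of `U(t,·)`, then
`ȳ'(t) = (D²_yU)⁻¹·∇_yΛ(ȳ,1) + ∂_ηΛ(ȳ,1)·∫M(z)z dz`. -/
theorem canonical_equation
    (n : ℕ) (hn : 1 ≤ n) (T : ℝ) (hT : 0 < T)
    (Λ : EuclideanSpace ℝ (Fin n) → ℝ → ℝ)
    (hΛ : ContDiff ℝ 1 (fun p : EuclideanSpace ℝ (Fin n) × ℝ => Λ p.1 p.2))
    (M : EuclideanSpace ℝ (Fin n) → ℝ)
    (hMmeas : Measurable M) (hMnn : ∀ z, 0 ≤ M z)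
    (hMprob : ∫ z, M z = 1)
    (hMexp : ∀ p : EuclideanSpace ℝ (Fin n),
      Integrable (fun z => M z * (1 + ‖z‖) * Real.exp ⟪p, z⟫))
    (U : ℝ → EuclideanSpace ℝ (Fin n) → ℝ)
    (hU : ContDiff ℝ 2 (fun q : ℝ × EuclideanSpace ℝ (Fin n) => U q.1 q.2))
    (η : ℝ → EuclideanSpace ℝ (Fin n) → ℝ)
    (hη : ∀ t y, η t y = ∫ z, M z * Real.exp ⟪gradient (U t) y, z⟫)
    (hHJ : ∀ t ∈ Icc (0:ℝ) T, ∀ y, deriv (fun s => U s y) t = -Λ y (η t y))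
    (ybar ybar' : ℝ → EuclideanSpace ℝ (Fin n))
    (hybar : ∀ t ∈ Icc (0:ℝ) T, HasDerivWithinAt ybar (ybar' t) (Icc 0 T) t)
    (hybar'cont : ContinuousOn ybar' (Icc 0 T))
    (hcrit : ∀ t ∈ Icc (0:ℝ) T, gradient (U t) (ybar t) = 0)
    (hinv : ∀ t ∈ Icc (0:ℝ) T,
      IsUnit (fderiv ℝ (fun y => gradient (U t) y) (ybar t))) :
    ∀ t ∈ Icc (0:ℝ) T,
      ybar' t =
        (Ring.inverse (fderiv ℝ (fun y => gradient (U t) y) (ybar t)))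
          (gradient (fun y => Λ y 1) (ybar t))
        + deriv (Λ (ybar t)) 1 • ∫ z, M z • z :=
  canonical_equation_general n T hT Λ hΛ M hMmeas hMprob hMexp U hU η hη hHJ ybar ybar' hybar hcrit
    hinv
end
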